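/- arXiv:2204.12082 — 2 statements merged into one kernel-verified Lean document; each statement's English description precedes it below -/
import Mathlib

section
/- Let r ≥ 2 and assume |j| > 2·h^{2/r}. Let (x',y') and (x,y) be primitive solutions of 0 < |F(x,y)| ≤ h, distinct up to sign, both related to the same r-th root of unity ω, such that u(x',y'), v(x',y'), u(x,y), v(x,y) are nonzero and μ(x',y') and μ(x,y) are real (the case D > 0), and suppose ζ(x,y) ≤ ζ(x',y'). Then Z(x,y) ≥ (|j|/(2h))·Z(x',y')^{r−1}. -/
/-!
Put `D = u v' − v u'`. It equals `j·(x y' − x' y)`, and `x y' ≠ x' y` for primitive pairs that are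
distinct up to sign, so `|j| ≤ |D|`. If `Z'^r ≤ h`, the trivial bound `|D| ≤ 2 Z Z'` already
suffices. Otherwise `ζ ≤ ζ' < 1`. For a solution related to `ω` with `μ` real, `w = u/(ωv)` has
`w^r` real and `|arg w| ≤ π/r`, so either `w > 0` or `w^r < 0`; the latter forces
`|F| = |u|^r + |v|^r ≥ Z^r`, i.e. `ζ ≥ 1`. Hence `u = s ω v` with `s ≥ 0`, and the
geometric-sum bound `|s − 1|·max(s,1)^{r−1} ≤ |s^r − 1|` gives `|u − ωv| ≤ Z ζ`. Expanding
`D = v'(u − ωv) − v(u' − ωv')` then yields `|D| ≤ 2 Z Z' ζ'`, and `Z'^r ζ' = |F'| ≤ h`.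
-/

open Complex

noncomputable section

/-- The linear form `αx + βy` evaluated at an integer pair. -/
def lin (α β : ℂ) (x y : ℤ) : ℂ := α * (x : ℂ) + β * (y : ℂ)

/-- The diagonalizable binary form `F(x,y) = (αx+βy)^r − (γx+δy)^r`. -/
def form (α β γ δ : ℂ) (r : ℕ) (x y : ℤ) : ℂ := lin α β x y ^ r - lin γ δ x y ^ r

/-- `Z(x,y) = max(|u|,|v|)`. -/
def Zmax (α β γ δ : ℂ) (x y : ℤ) : ℝ :=
  max (‖lin α β x y‖) (‖lin γ δ x y‖)

/-- `ζ(x,y) = |F(x,y)| / Z(x,y)^r`. -/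
def zetaF (α β γ δ : ℂ) (r : ℕ) (x y : ℤ) : ℝ :=
  ‖form α β γ δ r x y‖ / Zmax α β γ δ x y ^ r

/-- `μ(x,y) = v^r / u^r`. -/
def muF (α β γ δ : ℂ) (r : ℕ) (x y : ℤ) : ℂ :=
  lin γ δ x y ^ r / lin α β x y ^ r

/-- `F` has integer coefficients: each coefficient
`binom(r,k)·(α^k β^{r−k} − γ^k δ^{r−k})` is a rational integer. -/
def IntCoeffs (α β γ δ : ℂ) (r : ℕ) : Prop :=
  ∀ k ≤ r, ∃ n : ℤ, (r.choose k : ℂ) * (α ^ k * β ^ (r - k) - γ ^ k * δ ^ (r - k)) = (n : ℂ)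

/-- `(x,y)` is a primitive solution of the Thue inequality `0 < |F(x,y)| ≤ h`. -/
def IsPrimSol (α β γ δ : ℂ) (r h : ℕ) (x y : ℤ) : Prop :=
  Int.gcd x y = 1 ∧ 0 < ‖form α β γ δ r x y‖ ∧
    ‖form α β γ δ r x y‖ ≤ (h : ℝ)

/-- The solution `(x,y)` is related to the `r`-th root of unity `ω`: the principal
argument of `(u/v)·ω⁻¹` lies in `(−π/r, π/r]`. -/
def RelatedTo (α β γ δ : ℂ) (r : ℕ) (ω : ℂ) (x y : ℤ) : Prop :=
  (lin α β x y / lin γ δ x y * ω⁻¹).arg ∈ Set.Ioc (-(Real.pi / r)) (Real.pi / r)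

open scoped Real

theorem abs_sub_one_mul_max_pow_le {s : ℝ} (hs : 0 ≤ s) {r : ℕ} (hr : r ≠ 0) :
    |s - 1| * max s 1 ^ (r - 1) ≤ |s ^ r - 1| := by
  have hterm : ∀ i ∈ Finset.range r, 0 ≤ s ^ i := fun i _ => pow_nonneg hs i
  have hmax : max s 1 ^ (r - 1) ≤ ∑ i ∈ Finset.range r, s ^ i := by
    rcases le_total s 1 with hs1 | hs1
    · rw [max_eq_right hs1, one_pow]
      simpa using Finset.single_le_sum hterm (Finset.mem_range.2 (Nat.pos_of_ne_zero hr))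
    · rw [max_eq_left hs1]
      exact Finset.single_le_sum hterm (Finset.mem_range.2 (by omega))
  calc |s - 1| * max s 1 ^ (r - 1) ≤ |s - 1| * ∑ i ∈ Finset.range r, s ^ i := by gcongr
    _ = |s ^ r - 1| := by
      rw [← geom_sum_mul, abs_mul, abs_of_nonneg (Finset.sum_nonneg hterm), mul_comm]

theorem norm_sub_mul_max_pow_le_of_eq_mul {r : ℕ} (hr : r ≠ 0) {u v ω : ℂ} {s : ℝ}
    (hs : 0 ≤ s) (hω : ω ^ r = 1) (huv : u = s * ω * v) :
    ‖u - ω * v‖ * max ‖u‖ ‖v‖ ^ (r - 1) ≤ ‖u ^ r - v ^ r‖ := by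
  have hω1 : ‖ω‖ = 1 := norm_eq_one_of_pow_eq_one hω hr
  have hsub : u - ω * v = ((s - 1 : ℝ) : ℂ) * ω * v := by rw [huv]; push_cast; ring
  have hpow : u ^ r - v ^ r = ((s ^ r - 1 : ℝ) : ℂ) * v ^ r := by
    rw [huv, mul_pow, mul_pow, hω]; push_cast; ring
  have hmax : max ‖u‖ ‖v‖ = max s 1 * ‖v‖ := by
    rw [huv, max_mul_of_nonneg _ _ (norm_nonneg v)]
    simp [hω1, abs_of_nonneg hs]
  rw [hsub, hpow, hmax]
  simp only [norm_mul, norm_pow, norm_real, Real.norm_eq_abs, hω1, mul_one, mul_pow]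
  calc |s - 1| * ‖v‖ * (max s 1 ^ (r - 1) * ‖v‖ ^ (r - 1))
      = |s - 1| * max s 1 ^ (r - 1) * (‖v‖ * ‖v‖ ^ (r - 1)) := by ring
    _ ≤ |s ^ r - 1| * ‖v‖ ^ r := by
      rw [mul_pow_sub_one hr]
      gcongr
      exact abs_sub_one_mul_max_pow_le hs hr

theorem eq_norm_or_pow_eq_neg_of_arg_mem {r : ℕ} (hr : r ≠ 0) {w : ℂ}
    (harg : w.arg ∈ Set.Ioc (-(π / r)) (π / r)) (him : (w ^ r).im = 0) :
    w = ‖w‖ ∨ w ^ r = -((‖w‖ ^ r : ℝ) : ℂ) := by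
  have hpolar : ∀ n : ℕ, w ^ n = (‖w‖ ^ n : ℝ) * exp ((n * w.arg : ℝ) * I) := by
    intro n
    conv_lhs => rw [← norm_mul_exp_arg_mul_I w]
    rw [mul_pow, ← Complex.exp_nat_mul]
    push_cast
    ring_nf
  rcases eq_or_ne w 0 with rfl | hw
  · simp
  have hr0 : (0 : ℝ) < r := by positivity
  have hsin : Real.sin (r * w.arg) = 0 := by
    have him' := congrArg Complex.im (hpolar r)
    rw [him, im_ofReal_mul, exp_ofReal_mul_I_im] at him'
    exact (mul_eq_zero.1 him'.symm).resolve_left (by positivity)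
  have hlo : -π < r * w.arg := by
    have := harg.1
    rwa [← neg_div, div_lt_iff₀' hr0] at this
  have hhi : r * w.arg ≤ π := (le_div_iff₀' hr0).1 harg.2
  rcases hhi.lt_or_eq with hlt | heq
  · left
    have harg0 : w.arg = 0 :=
      (mul_eq_zero.1 ((Real.sin_eq_zero_iff_of_lt_of_lt hlo hlt).1 hsin)).resolve_left hr0.ne'
    simpa [harg0] using hpolar 1
  · right
    rw [hpolar r, heq, exp_pi_mul_I]
    ring

theorem max_pow_le_norm_pow_sub_pow_of_eq_neg {r : ℕ} {u v : ℂ} {t : ℝ} (ht : 0 ≤ t)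
    (huv : u ^ r = -(t : ℂ) * v ^ r) : max ‖u‖ ‖v‖ ^ r ≤ ‖u ^ r - v ^ r‖ := by
  have hu : ‖u‖ ^ r = t * ‖v‖ ^ r := by
    rw [← norm_pow, huv, norm_mul, norm_neg, norm_real, Real.norm_of_nonneg ht, norm_pow]
  have hnorm : ‖u ^ r - v ^ r‖ = ‖u‖ ^ r + ‖v‖ ^ r := by
    rw [huv, show -(t : ℂ) * v ^ r - v ^ r = -((t + 1 : ℝ) : ℂ) * v ^ r by push_cast; ring,
      norm_mul, norm_neg, norm_real, Real.norm_of_nonneg (by positivity), norm_pow, hu]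
    ring
  rw [hnorm]
  rcases max_choice ‖u‖ ‖v‖ with h | h <;> rw [h] <;>
    linarith [pow_nonneg (norm_nonneg u) r, pow_nonneg (norm_nonneg v) r]

theorem exists_nonneg_eq_mul_of_arg_mem {r : ℕ} (hr : r ≠ 0) {u v ω : ℂ} (hω : ω ^ r = 1)
    (harg : (u / v * ω⁻¹).arg ∈ Set.Ioc (-(π / r)) (π / r)) (hμ : (v ^ r / u ^ r).im = 0)
    (hF : ‖u ^ r - v ^ r‖ < max ‖u‖ ‖v‖ ^ r) :
    ∃ s : ℝ, 0 ≤ s ∧ u = s * ω * v := by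
  have hv : v ≠ 0 := by
    rintro rfl
    simp [zero_pow hr] at hF
  have hω0 : ω ≠ 0 := by
    rintro rfl
    simp [zero_pow hr] at hω
  set w := u / v * ω⁻¹ with hw
  have huw : u = w * ω * v := by rw [hw]; field_simp
  have hwr : w ^ r = (v ^ r / u ^ r)⁻¹ := by rw [hw, mul_pow, div_pow, inv_pow, hω]; simp
  rcases eq_norm_or_pow_eq_neg_of_arg_mem hr harg (by rw [hwr, inv_im, hμ]; simp) with hw1 | hw1
  · exact ⟨‖w‖, norm_nonneg w, hw1 ▸ huw⟩
  · refine absurd hF (not_lt.2 (max_pow_le_norm_pow_sub_pow_of_eq_neg (t := ‖w‖ ^ r)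
      (by positivity) ?_))
    rw [huw, mul_pow, mul_pow, hω, hw1]
    ring

theorem norm_sub_le_max_mul_div {r : ℕ} (hr : r ≠ 0) {u v ω : ℂ} (hω : ω ^ r = 1)
    (harg : (u / v * ω⁻¹).arg ∈ Set.Ioc (-(π / r)) (π / r)) (hμ : (v ^ r / u ^ r).im = 0)
    (hζ : ‖u ^ r - v ^ r‖ / max ‖u‖ ‖v‖ ^ r < 1) :
    ‖u - ω * v‖ ≤ max ‖u‖ ‖v‖ * (‖u ^ r - v ^ r‖ / max ‖u‖ ‖v‖ ^ r) := by
  rcases (norm_nonneg u).trans (le_max_left _ (‖v‖)) |>.eq_or_lt with hZ | hZ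
  · have hu : u = 0 := norm_le_zero_iff.1 (hZ ▸ le_max_left _ _)
    have hv : v = 0 := norm_le_zero_iff.1 (hZ ▸ le_max_right _ _)
    simp [hu, hv]
  have hF : ‖u ^ r - v ^ r‖ < max ‖u‖ ‖v‖ ^ r := by rwa [div_lt_one (by positivity)] at hζ
  obtain ⟨s, hs, huv⟩ := exists_nonneg_eq_mul_of_arg_mem hr hω harg hμ hF
  rw [mul_div_assoc', le_div_iff₀ (by positivity), ← mul_pow_sub_one hr, mul_left_comm]
  exact mul_le_mul_of_nonneg_left (norm_sub_mul_max_pow_le_of_eq_mul hr hs hω huv) hZ.le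

theorem norm_mul_sub_mul_le (u v u' v' : ℂ) :
    ‖u * v' - v * u'‖ ≤ 2 * max ‖u‖ ‖v‖ * max ‖u'‖ ‖v'‖ := by
  calc ‖u * v' - v * u'‖ ≤ ‖u‖ * ‖v'‖ + ‖v‖ * ‖u'‖ := by
        simpa only [norm_mul] using norm_sub_le (u * v') (v * u')
    _ ≤ max ‖u‖ ‖v‖ * max ‖u'‖ ‖v'‖ + max ‖u‖ ‖v‖ * max ‖u'‖ ‖v'‖ := by
        gcongr <;> simp
    _ = 2 * max ‖u‖ ‖v‖ * max ‖u'‖ ‖v'‖ := by ring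

theorem norm_mul_sub_mul_mul_max_pow_le {r : ℕ} (hr : r ≠ 0) {u v u' v' ω : ℂ} {h : ℝ}
    (hω : ω ^ r = 1)
    (harg : (u / v * ω⁻¹).arg ∈ Set.Ioc (-(π / r)) (π / r))
    (harg' : (u' / v' * ω⁻¹).arg ∈ Set.Ioc (-(π / r)) (π / r))
    (hμ : (v ^ r / u ^ r).im = 0) (hμ' : (v' ^ r / u' ^ r).im = 0)
    (hF' : ‖u' ^ r - v' ^ r‖ ≤ h)
    (hζ : ‖u ^ r - v ^ r‖ / max ‖u‖ ‖v‖ ^ r ≤ ‖u' ^ r - v' ^ r‖ / max ‖u'‖ ‖v'‖ ^ r) :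
    ‖u * v' - v * u'‖ * max ‖u'‖ ‖v'‖ ^ (r - 1) ≤ 2 * h * max ‖u‖ ‖v‖ := by
  set Z := max ‖u‖ ‖v‖
  set Z' := max ‖u'‖ ‖v'‖
  set ζ' := ‖u' ^ r - v' ^ r‖ / Z' ^ r
  have hZ : 0 ≤ Z := (norm_nonneg u).trans (le_max_left _ _)
  have hZ' : 0 ≤ Z' := (norm_nonneg u').trans (le_max_left _ _)
  -- `t = 1` if `Z' ^ r ≤ h`, and `t = ζ'` otherwise
  obtain ⟨t, ht, hcross⟩ : ∃ t, t * Z' ^ r ≤ h ∧ ‖u * v' - v * u'‖ ≤ 2 * Z * Z' * t := by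
    rcases le_or_gt (Z' ^ r) h with hsmall | hlarge
    · exact ⟨1, by rwa [one_mul], by simpa using norm_mul_sub_mul_le u v u' v'⟩
    have hF'lt : ‖u' ^ r - v' ^ r‖ < Z' ^ r := hF'.trans_lt hlarge
    have hZ'r : 0 < Z' ^ r := (norm_nonneg _).trans_lt hF'lt
    have hζ' : ζ' < 1 := (div_lt_one hZ'r).2 hF'lt
    refine ⟨ζ', by rw [div_mul_cancel₀ _ hZ'r.ne']; exact hF', ?_⟩
    have hA := (norm_sub_le_max_mul_div hr hω harg hμ (hζ.trans_lt hζ')).trans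
      (mul_le_mul_of_nonneg_left hζ hZ)
    have hA' := norm_sub_le_max_mul_div hr hω harg' hμ' hζ'
    calc ‖u * v' - v * u'‖ = ‖v' * (u - ω * v) - v * (u' - ω * v')‖ := by ring_nf
      _ ≤ ‖v'‖ * ‖u - ω * v‖ + ‖v‖ * ‖u' - ω * v'‖ := by
        simpa only [norm_mul] using norm_sub_le (v' * (u - ω * v)) (v * (u' - ω * v'))
      _ ≤ Z' * (Z * ζ') + Z * (Z' * ζ') := by
        gcongr
        · exact le_max_right _ _
        · exact le_max_right _ _
      _ = 2 * Z * Z' * ζ' := by ring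
  calc ‖u * v' - v * u'‖ * Z' ^ (r - 1) ≤ 2 * Z * Z' * t * Z' ^ (r - 1) := by gcongr
    _ = 2 * Z * (t * Z' ^ r) := by rw [← mul_pow_sub_one hr Z']; ring
    _ ≤ 2 * Z * h := by gcongr
    _ = 2 * h * Z := by ring

theorem eq_or_eq_neg_of_mul_eq_mul {x y x' y' : ℤ} (h : IsCoprime x y) (h' : IsCoprime x' y')
    (hxy : x * y' = x' * y) : (x, y) = (x', y') ∨ (x, y) = (-x', -y') := by
  obtain ⟨a, b, hab⟩ := h
  obtain ⟨c, d, hcd⟩ := h'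
  -- Bézout makes each pair an integer multiple of the other
  have hx : x = (c * x + d * y) * x' := by linear_combination (-x) * hcd + d * hxy
  have hy : y = (c * x + d * y) * y' := by linear_combination (-y) * hcd - c * hxy
  have hx' : x' = (a * x' + b * y') * x := by linear_combination (-x') * hab - b * hxy
  have hy' : y' = (a * x' + b * y') * y := by linear_combination (-y') * hab + a * hxy
  set k := c * x + d * y
  set k' := a * x' + b * y'
  have hk : k * k' = 1 := by
    linear_combination (-a) * hx - a * k * hx' - b * hy - b * k * hy' - (k * k' - 1) * hab
  rcases Int.eq_one_or_neg_one_of_mul_eq_one hk with hk1 | hk1 <;>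
    rw [hk1] at hx hy <;> simp [hx, hy]

theorem norm_le_norm_lin_mul_sub {α β γ δ : ℂ} {x y x' y' : ℤ} (h : Int.gcd x y = 1)
    (h' : Int.gcd x' y' = 1) (hne : (x, y) ≠ (x', y') ∧ (x, y) ≠ (-x', -y')) :
    ‖α * δ - β * γ‖ ≤ ‖lin α β x y * lin γ δ x' y' - lin γ δ x y * lin α β x' y'‖ := by
  have hcross : lin α β x y * lin γ δ x' y' - lin γ δ x y * lin α β x' y'
      = (α * δ - β * γ) * ((x * y' - x' * y : ℤ) : ℂ) := by
    simp only [lin]; push_cast; ring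
  have hd : x * y' - x' * y ≠ 0 := fun hd =>
    (eq_or_eq_neg_of_mul_eq_mul (Int.isCoprime_iff_gcd_eq_one.2 h)
      (Int.isCoprime_iff_gcd_eq_one.2 h') (sub_eq_zero.1 hd)).elim hne.1 hne.2
  rw [hcross, norm_mul, norm_intCast]
  exact le_mul_of_one_le_right (norm_nonneg _) (by exact_mod_cast Int.one_le_abs hd)

theorem Zmax_nonneg (α β γ δ : ℂ) (x y : ℤ) : 0 ≤ Zmax α β γ δ x y :=
  (norm_nonneg _).trans (le_max_left _ _)

theorem gap_principle_Dpos_general (r h : ℕ) (hr : 2 ≤ r)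
    (α β γ δ j : ℂ) (hj : j = α * δ - β * γ)
    (x' y' x y : ℤ)
    (hsol' : IsPrimSol α β γ δ r h x' y') (hsol : IsPrimSol α β γ δ r h x y)
    (hne : (x, y) ≠ (x', y') ∧ (x, y) ≠ (-x', -y'))
    (hμ' : (muF α β γ δ r x' y').im = 0) (hμ : (muF α β γ δ r x y).im = 0)
    (ω : ℂ) (hω : ω ^ r = 1)
    (hrel' : RelatedTo α β γ δ r ω x' y') (hrel : RelatedTo α β γ δ r ω x y)
    (hζ : zetaF α β γ δ r x y ≤ zetaF α β γ δ r x' y') :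
    ‖j‖ / (2 * (h : ℝ)) * Zmax α β γ δ x' y' ^ (r - 1) ≤ Zmax α β γ δ x y := by
  have hbound := norm_mul_sub_mul_mul_max_pow_le (by omega) hω hrel hrel' hμ hμ' hsol'.2.2 hζ
  have hcross : ‖j‖ ≤ ‖lin α β x y * lin γ δ x' y' - lin γ δ x y * lin α β x' y'‖ := by
    rw [hj]; exact norm_le_norm_lin_mul_sub hsol.1 hsol'.1 hne
  rw [div_mul_eq_mul_div]
  refine div_le_of_le_mul₀ (by positivity) (Zmax_nonneg ..) ?_
  calc ‖j‖ * Zmax α β γ δ x' y' ^ (r - 1)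
      ≤ ‖lin α β x y * lin γ δ x' y' - lin γ δ x y * lin α β x' y'‖
        * Zmax α β γ δ x' y' ^ (r - 1) :=
        mul_le_mul_of_nonneg_right hcross (pow_nonneg (Zmax_nonneg ..) _)
    _ ≤ 2 * h * Zmax α β γ δ x y := hbound
    _ = Zmax α β γ δ x y * (2 * h) := mul_comm _ _

/-- (Gap principle, case `D > 0`: `μ` real.) Let `r ≥ 2`, assume
`|j| > 2·h^{2/r}`, and let `(x',y')`, `(x,y)` be primitive solutions of `0 < |F| ≤ h`,
distinct up to sign, both related to the same `r`-th root of unity `ω`, with `u, v`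
nonzero and `μ` real at both solutions, and `ζ(x,y) ≤ ζ(x',y')`. Then
`Z(x,y) ≥ (|j|/(2h))·Z(x',y')^{r−1}`. -/
theorem gap_principle_Dpos (r h : ℕ) (hr : 2 ≤ r) (hh : 1 ≤ h)
    (α β γ δ j : ℂ) (hj : j = α * δ - β * γ) (hj0 : j ≠ 0) (hint : IntCoeffs α β γ δ r)
    (hjbig : 2 * (h : ℝ) ^ ((2 : ℝ) / r) < ‖j‖)
    (x' y' x y : ℤ)
    (hsol' : IsPrimSol α β γ δ r h x' y') (hsol : IsPrimSol α β γ δ r h x y)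
    (hne : (x, y) ≠ (x', y') ∧ (x, y) ≠ (-x', -y'))
    (hu' : lin α β x' y' ≠ 0) (hv' : lin γ δ x' y' ≠ 0)
    (hu : lin α β x y ≠ 0) (hv : lin γ δ x y ≠ 0)
    (hμ' : (muF α β γ δ r x' y').im = 0) (hμ : (muF α β γ δ r x y).im = 0)
    (ω : ℂ) (hω : ω ^ r = 1)
    (hrel' : RelatedTo α β γ δ r ω x' y') (hrel : RelatedTo α β γ δ r ω x y)
    (hζ : zetaF α β γ δ r x y ≤ zetaF α β γ δ r x' y') :
    ‖j‖ / (2 * (h : ℝ)) * Zmax α β γ δ x' y' ^ (r - 1) ≤ Zmax α β γ δ x y :=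
  gap_principle_Dpos_general r h hr α β γ δ j hj x' y' x y hsol' hsol hne hμ' hμ ω hω hrel' hrel hζ
end
end

section
/- Let r ≥ 7 and suppose |j|^{r(r−1)} / (2^{r²−r}·h^{2r−2}) ≥ r^{13r²(r−1)/(r²−5r−2)}·h^{4(r−1)(r²−r+2)/(r²−5r−2)}. If D > 0 and F is definite (i.e., either F(x,y) > 0 for all real (x,y) ≠ (0,0), or F(x,y) < 0 for all real (x,y) ≠ (0,0)), then N_F(h) ≤ 1. -/
/-!
Since `D > 0`, the quadratic form `Ax² + Bxy + Cy²` has two independent real zeros, each of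
which kills `u = αx + βy` or `v = γx + δy`; as `j ≠ 0`, `u` and `v` are complex multiples `κ s`,
`κ' t` of independent real linear forms `s`, `t`. Definiteness forces `r` to be even, and
evaluating `F` where `t`, resp. `s`, vanishes shows that `κ^r` and `-κ'^r` are real with the sign
of `F`. Hence `u^r` and `-v^r` are real of one sign at every integer point,
`|F| = |u|^r + |v|^r`, and every solution has `|u|^r, |v|^r ≤ h`. For two solutions that are not
`±` each other the determinant is a nonzero integer, and `j · det = u₁v₂ - u₂v₁` gives
`|j|^r ≤ 2^r h²`, i.e. `Δ' ≤ 1`, whereas the hypothesis on `Δ'` forces `Δ' > 1`.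
-/

open Complex

noncomputable section

open scoped ComplexOrder

theorem exists_independent_zeros_of_discrim_pos {A B C : ℝ} (hD : 0 < B ^ 2 - 4 * A * C) :
    ∃ s₁ t₁ s₂ t₂ : ℝ, s₁ * t₂ - s₂ * t₁ ≠ 0 ∧
      A * s₁ ^ 2 + B * s₁ * t₁ + C * t₁ ^ 2 = 0 ∧ A * s₂ ^ 2 + B * s₂ * t₂ + C * t₂ ^ 2 = 0 := by
  by_cases hA : A = 0
  · subst hA
    have hB : B ≠ 0 := by rintro rfl; simp at hD
    exact ⟨1, 0, -C, B, by simpa using hB, by ring, by ring⟩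
  · have he : √(B ^ 2 - 4 * A * C) ^ 2 = B ^ 2 - 4 * A * C := Real.sq_sqrt hD.le
    have he0 : 0 < √(B ^ 2 - 4 * A * C) := Real.sqrt_pos.mpr hD
    refine ⟨-B + √(B ^ 2 - 4 * A * C), 2 * A, -B - √(B ^ 2 - 4 * A * C), 2 * A, ?_,
      by linear_combination A * he, by linear_combination A * he⟩
    rw [show ∀ e, (-B + e) * (2 * A) - (-B - e) * (2 * A) = 4 * A * e by intro e; ring]
    exact mul_ne_zero (mul_ne_zero four_ne_zero hA) he0.ne'

theorem exists_eq_mul_of_real_zero {α β : ℂ} {s t : ℝ} (hst : (s, t) ≠ (0, 0))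
    (h : α * s + β * t = 0) : ∃ κ : ℂ, α = κ * t ∧ β = κ * (-s : ℝ) := by
  by_cases hs : s = 0
  · subst hs
    have ht : (t : ℂ) ≠ 0 := by simpa using hst
    exact ⟨α / t, by field_simp, by simpa [ht] using h⟩
  · have hs : (s : ℂ) ≠ 0 := by exact_mod_cast hs
    refine ⟨-β / s, ?_, by push_cast; field_simp⟩
    field_simp
    linear_combination h

theorem eq_zero_of_two_real_zeros {α β : ℂ} {s₁ t₁ s₂ t₂ : ℝ} (hdet : s₁ * t₂ - s₂ * t₁ ≠ 0)
    (h₁ : α * s₁ + β * t₁ = 0) (h₂ : α * s₂ + β * t₂ = 0) : α = 0 ∧ β = 0 := by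
  have hdet : ((s₁ * t₂ - s₂ * t₁ : ℝ) : ℂ) ≠ 0 := by exact_mod_cast hdet
  refine ⟨(mul_eq_zero.mp ?_).resolve_right hdet, (mul_eq_zero.mp ?_).resolve_right hdet⟩
  · push_cast; linear_combination (t₂ : ℂ) * h₁ - (t₁ : ℂ) * h₂
  · push_cast; linear_combination (s₁ : ℂ) * h₂ - (s₂ : ℂ) * h₁

theorem exists_real_multiples_of_real_zeros {α β γ δ : ℂ} {s₁ t₁ s₂ t₂ : ℝ}
    (hdet : s₁ * t₂ - s₂ * t₁ ≠ 0) (h₁ : α * s₁ + β * t₁ = 0) (h₂ : γ * s₂ + δ * t₂ = 0) :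
    ∃ (κ κ' : ℂ) (a b c d : ℝ), a * d - b * c ≠ 0 ∧
      α = κ * a ∧ β = κ * b ∧ γ = κ' * c ∧ δ = κ' * d := by
  obtain ⟨κ, hα, hβ⟩ := exists_eq_mul_of_real_zero (by rintro ⟨⟩; simp at hdet) h₁
  obtain ⟨κ', hγ, hδ⟩ := exists_eq_mul_of_real_zero (by rintro ⟨⟩; simp at hdet) h₂
  exact ⟨κ, κ', t₁, -s₁, t₂, -s₂, by contrapose! hdet; linarith, hα, hβ, hγ, hδ⟩

theorem exists_real_multiples_of_discrim_pos {α β γ δ : ℂ} {A B C : ℝ} (hj : α * δ - β * γ ≠ 0)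
    (hD : 0 < B ^ 2 - 4 * A * C)
    (hQ : ∀ s t : ℝ, A * s ^ 2 + B * s * t + C * t ^ 2 = 0 →
      (α * s + β * t) * (γ * s + δ * t) = 0) :
    ∃ (κ κ' : ℂ) (a b c d : ℝ), a * d - b * c ≠ 0 ∧
      α = κ * a ∧ β = κ * b ∧ γ = κ' * c ∧ δ = κ' * d := by
  obtain ⟨s₁, t₁, s₂, t₂, hdet, hz₁, hz₂⟩ := exists_independent_zeros_of_discrim_pos hD
  have hdet' : s₂ * t₁ - s₁ * t₂ ≠ 0 := by contrapose! hdet; linarith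
  rcases mul_eq_zero.mp (hQ _ _ hz₁) with h₁ | h₁ <;>
    rcases mul_eq_zero.mp (hQ _ _ hz₂) with h₂ | h₂
  · obtain ⟨rfl, rfl⟩ := eq_zero_of_two_real_zeros hdet h₁ h₂
    simp at hj
  · exact exists_real_multiples_of_real_zeros hdet h₁ h₂
  · exact exists_real_multiples_of_real_zeros hdet' h₂ h₁
  · obtain ⟨rfl, rfl⟩ := eq_zero_of_two_real_zeros hdet h₁ h₂
    simp at hj

theorem norm_sub_eq_add_of_nonneg_of_nonpos {z w : ℂ} (hz : 0 ≤ z) (hw : w ≤ 0) :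
    ‖z - w‖ = ‖z‖ + ‖w‖ := by
  rw [← re_eq_norm.mpr (sub_nonneg.mpr (hw.trans hz)), ← re_eq_norm.mpr hz,
    ← neg_re_eq_norm.mpr hw, sub_re, sub_eq_add_neg]

/-- In the order `ComplexOrder` on `ℂ`, `0 < z` says that `z` is a positive real number. -/
def FormPosDef (α β γ δ : ℂ) (r : ℕ) : Prop :=
  ∀ x y : ℝ, (x, y) ≠ (0, 0) → 0 < (α * x + β * y) ^ r - (γ * x + δ * y) ^ r

namespace FormPosDef

variable {α β γ δ : ℂ} {r : ℕ}

theorem ne_zero (hF : FormPosDef α β γ δ r) : r ≠ 0 := by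
  rintro rfl
  simpa using hF 1 0 (by simp)

theorem even (hF : FormPosDef α β γ δ r) : Even r := by
  by_contra hodd
  rw [Nat.not_even_iff_odd] at hodd
  have h₁ := hF 1 0 (by simp)
  have h₂ := hF (-1) 0 (by simp)
  simp only [ofReal_one, ofReal_neg, ofReal_zero, mul_one, mul_neg, mul_zero, add_zero,
    hodd.neg_pow] at h₁ h₂
  exact h₁.not_gt (by linear_combination h₂)

theorem pow_pos_and_pow_neg (hF : FormPosDef α β γ δ r) {κ κ' : ℂ} {a b c d : ℝ}
    (hE : a * d - b * c ≠ 0) (hα : α = κ * a) (hβ : β = κ * b) (hγ : γ = κ' * c)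
    (hδ : δ = κ' * d) : 0 < κ ^ r ∧ κ' ^ r < 0 := by
  set E := a * d - b * c
  have hEinv : (0 : ℂ) < ((E ^ r)⁻¹ : ℝ) := zero_lt_real.mpr (inv_pos.mpr (hF.even.pow_pos hE))
  have hcancel (z : ℂ) : z = z * (E : ℂ) ^ r * ((E ^ r)⁻¹ : ℝ) := by
    push_cast
    field_simp
  have h₁ := hF d (-c) (by rintro h; simp only [Prod.mk.injEq, neg_eq_zero] at h; simp [E, h] at hE)
  have h₂ := hF b (-a) (by rintro h; simp only [Prod.mk.injEq, neg_eq_zero] at h; simp [E, h] at hE)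
  have hu₁ : α * d + β * (-c : ℝ) = κ * E := by simp only [hα, hβ, E]; push_cast; ring
  have hv₁ : γ * d + δ * (-c : ℝ) = 0 := by simp only [hγ, hδ]; push_cast; ring
  have hu₂ : α * b + β * (-a : ℝ) = 0 := by simp only [hα, hβ]; push_cast; ring
  have hv₂ : γ * b + δ * (-a : ℝ) = -(κ' * E) := by simp only [hγ, hδ, E]; push_cast; ring
  rw [hu₁, hv₁, zero_pow hF.ne_zero, sub_zero, mul_pow] at h₁
  rw [hu₂, hv₂, zero_pow hF.ne_zero, zero_sub, hF.even.neg_pow, mul_pow, neg_pos] at h₂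
  exact ⟨hcancel (κ ^ r) ▸ mul_pos h₁ hEinv, hcancel (κ' ^ r) ▸ mul_neg_of_neg_of_pos h₂ hEinv⟩

theorem norm_lin_pow_le (hF : FormPosDef α β γ δ r) {κ κ' : ℂ} {a b c d : ℝ}
    (hE : a * d - b * c ≠ 0) (hα : α = κ * a) (hβ : β = κ * b) (hγ : γ = κ' * c)
    (hδ : δ = κ' * d) (x y : ℤ) :
    ‖lin α β x y‖ ^ r ≤ ‖form α β γ δ r x y‖ ∧ ‖lin γ δ x y‖ ^ r ≤ ‖form α β γ δ r x y‖ := by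
  obtain ⟨hκ, hκ'⟩ := hF.pow_pos_and_pow_neg hE hα hβ hγ hδ
  have hu : lin α β x y ^ r = κ ^ r * ((a * x + b * y) ^ r : ℝ) := by
    simp only [lin, hα, hβ]; push_cast; rw [← mul_pow]; ring
  have hv : lin γ δ x y ^ r = κ' ^ r * ((c * x + d * y) ^ r : ℝ) := by
    simp only [lin, hγ, hδ]; push_cast; rw [← mul_pow]; ring
  have hu0 : 0 ≤ lin α β x y ^ r :=
    hu ▸ mul_nonneg hκ.le (zero_le_real.mpr (hF.even.pow_nonneg _))
  have hv0 : lin γ δ x y ^ r ≤ 0 :=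
    hv ▸ mul_nonpos_of_nonpos_of_nonneg hκ'.le (zero_le_real.mpr (hF.even.pow_nonneg _))
  rw [form, norm_sub_eq_add_of_nonneg_of_nonpos hu0 hv0, norm_pow, norm_pow]
  exact ⟨le_add_of_nonneg_right (by positivity), le_add_of_nonneg_left (by positivity)⟩

end FormPosDef

theorem formPosDef_or_formPosDef_swap {α β γ δ : ℂ} {r : ℕ}
    (hdef : (∀ x y : ℝ, (x, y) ≠ (0, 0) → ∃ a : ℝ, 0 < a ∧
        (a : ℂ) = (α * x + β * y) ^ r - (γ * x + δ * y) ^ r) ∨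
      (∀ x y : ℝ, (x, y) ≠ (0, 0) → ∃ a : ℝ, a < 0 ∧
        (a : ℂ) = (α * x + β * y) ^ r - (γ * x + δ * y) ^ r)) :
    FormPosDef α β γ δ r ∨ FormPosDef γ δ α β r := by
  refine hdef.imp (fun H x y hxy => ?_) (fun H x y hxy => ?_) <;> obtain ⟨a, ha, he⟩ := H x y hxy
  · exact he ▸ zero_lt_real.mpr ha
  · rw [← neg_sub, ← he, ← ofReal_neg]
    exact zero_lt_real.mpr (neg_pos.mpr ha)

theorem norm_lin_pow_le_norm_form {α β γ δ : ℂ} {r : ℕ} {A B C : ℝ} (hj : α * δ - β * γ ≠ 0)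
    (hD : 0 < B ^ 2 - 4 * A * C)
    (hQ : ∀ s t : ℝ, A * s ^ 2 + B * s * t + C * t ^ 2 = 0 →
      (α * s + β * t) * (γ * s + δ * t) = 0)
    (hF : FormPosDef α β γ δ r ∨ FormPosDef γ δ α β r) (x y : ℤ) :
    ‖lin α β x y‖ ^ r ≤ ‖form α β γ δ r x y‖ ∧ ‖lin γ δ x y‖ ^ r ≤ ‖form α β γ δ r x y‖ := by
  obtain ⟨κ, κ', a, b, c, d, hE, hα, hβ, hγ, hδ⟩ := exists_real_multiples_of_discrim_pos hj hD hQ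
  rcases hF with hF | hF
  · exact hF.norm_lin_pow_le hE hα hβ hγ hδ x y
  · have hE' : c * b - d * a ≠ 0 := by contrapose! hE; linarith
    rw [form, norm_sub_rev, ← form]
    exact (hF.norm_lin_pow_le hE' hγ hδ hα hβ x y).symm

theorem norm_mul_sub_mul_pow_le {u₁ v₁ u₂ v₂ : ℂ} {r : ℕ} {H : ℝ} (hr : r ≠ 0)
    (hu₁ : ‖u₁‖ ^ r ≤ H) (hv₁ : ‖v₁‖ ^ r ≤ H) (hu₂ : ‖u₂‖ ^ r ≤ H) (hv₂ : ‖v₂‖ ^ r ≤ H) :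
    ‖u₁ * v₂ - u₂ * v₁‖ ^ r ≤ 2 ^ r * H ^ 2 := by
  have hH : 0 ≤ H := (pow_nonneg (norm_nonneg u₁) r).trans hu₁
  have hprod {u v : ℂ} (hu : ‖u‖ ^ r ≤ H) (hv : ‖v‖ ^ r ≤ H) : (‖u‖ * ‖v‖) ^ r ≤ H ^ 2 := by
    rw [mul_pow, sq]
    exact mul_le_mul hu hv (by positivity) hH
  calc ‖u₁ * v₂ - u₂ * v₁‖ ^ r ≤ (‖u₁‖ * ‖v₂‖ + ‖u₂‖ * ‖v₁‖) ^ r := by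
        gcongr
        exact (norm_sub_le _ _).trans_eq (by rw [norm_mul, norm_mul])
    _ ≤ 2 ^ (r - 1) * ((‖u₁‖ * ‖v₂‖) ^ r + (‖u₂‖ * ‖v₁‖) ^ r) :=
        add_pow_le (by positivity) (by positivity) r
    _ ≤ 2 ^ (r - 1) * (H ^ 2 + H ^ 2) := by gcongr <;> exact hprod ‹_› ‹_›
    _ = 2 ^ r * H ^ 2 := by
        rw [← two_mul, ← mul_assoc, ← pow_succ, Nat.sub_add_cancel (Nat.pos_of_ne_zero hr)]

theorem lin_mul_lin_sub_lin_mul_lin (α β γ δ : ℂ) (x₁ y₁ x₂ y₂ : ℤ) :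
    lin α β x₁ y₁ * lin γ δ x₂ y₂ - lin α β x₂ y₂ * lin γ δ x₁ y₁ =
      (α * δ - β * γ) * ((x₁ * y₂ - x₂ * y₁ : ℤ) : ℂ) := by
  simp only [lin]
  push_cast
  ring

theorem norm_pow_le_of_det_ne_zero {α β γ δ : ℂ} {r : ℕ} {H : ℝ} (hr : r ≠ 0) {p q : ℤ × ℤ}
    (hdet : p.1 * q.2 - q.1 * p.2 ≠ 0)
    (hp : ‖lin α β p.1 p.2‖ ^ r ≤ H ∧ ‖lin γ δ p.1 p.2‖ ^ r ≤ H)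
    (hq : ‖lin α β q.1 q.2‖ ^ r ≤ H ∧ ‖lin γ δ q.1 q.2‖ ^ r ≤ H) :
    ‖α * δ - β * γ‖ ^ r ≤ 2 ^ r * H ^ 2 := by
  have hdet₁ : (1 : ℝ) ≤ ‖((p.1 * q.2 - q.1 * p.2 : ℤ) : ℂ)‖ := by
    rw [norm_intCast]
    exact_mod_cast Int.one_le_abs hdet
  calc ‖α * δ - β * γ‖ ^ r ≤ ‖(α * δ - β * γ) * ((p.1 * q.2 - q.1 * p.2 : ℤ) : ℂ)‖ ^ r := by
        gcongr
        rw [norm_mul]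
        exact le_mul_of_one_le_right (norm_nonneg _) hdet₁
    _ ≤ 2 ^ r * H ^ 2 := by
        rw [← lin_mul_lin_sub_lin_mul_lin]
        exact norm_mul_sub_mul_pow_le hr hp.1 hp.2 hq.1 hq.2

theorem div_le_one_of_pow_le_two_pow_mul_sq {J H : ℝ} {r : ℕ} (hJ : 0 ≤ J) (hH : 0 < H)
    (h : J ^ r ≤ 2 ^ r * H ^ 2) : J ^ (r * (r - 1)) / (2 ^ (r ^ 2 - r) * H ^ (2 * r - 2)) ≤ 1 := by
  rw [div_le_one (by positivity), pow_mul]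
  calc (J ^ r) ^ (r - 1) ≤ (2 ^ r * H ^ 2) ^ (r - 1) := by gcongr
    _ = 2 ^ (r ^ 2 - r) * H ^ (2 * r - 2) := by
        rw [mul_pow, ← pow_mul, ← pow_mul, Nat.mul_sub_one, Nat.mul_sub_one, sq]

theorem one_lt_rpow_mul_rpow {r h : ℝ} (hr : 7 ≤ r) (hh : 1 ≤ h) :
    1 < r ^ (13 * r ^ 2 * (r - 1) / (r ^ 2 - 5 * r - 2)) *
      h ^ (4 * (r - 1) * (r ^ 2 - r + 2) / (r ^ 2 - 5 * r - 2)) := by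
  have hden : 0 < r ^ 2 - 5 * r - 2 := by nlinarith
  exact one_lt_mul_of_lt_of_le (Real.one_lt_rpow (by linarith) (div_pos (by nlinarith) hden))
    (Real.one_le_rpow hh (div_nonneg (by nlinarith) hden.le))

theorem eq_or_eq_neg_of_gcd_eq_one_of_det_eq_zero {p q : ℤ × ℤ} (hp : Int.gcd p.1 p.2 = 1)
    (hq : Int.gcd q.1 q.2 = 1) (hdet : p.1 * q.2 - q.1 * p.2 = 0) : q = p ∨ q = -p := by
  obtain ⟨m, n, hmn⟩ := Int.isCoprime_iff_gcd_eq_one.mpr hp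
  set k := m * q.1 + n * q.2
  have hx : q.1 = k * p.1 := by linear_combination (-q.1) * hmn - n * hdet
  have hy : q.2 = k * p.2 := by linear_combination (-q.2) * hmn + m * hdet
  have hk : k.natAbs * Int.gcd p.1 p.2 = 1 := by
    rw [← Int.gcd_mul_left, ← hx, ← hy, hq]
  rw [hp, mul_one] at hk
  rcases Int.natAbs_eq_iff.mp hk with hk | hk <;> rw [hk] at hx hy
  · exact Or.inl (Prod.ext (by simpa using hx) (by simpa using hy))
  · exact Or.inr (Prod.ext (by simpa using hx) (by simpa using hy))

theorem exists_finset_card_le_one_of_eq_or_eq_neg {α : Type*} [InvolutiveNeg α] {P : α → Prop}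
    (hP : ∀ p q, P p → P q → q = p ∨ q = -p) :
    ∃ T : Finset α, T.card ≤ 1 ∧ ∀ p, P p → p ∈ T ∨ -p ∈ T := by
  by_cases hex : ∃ p, P p
  · obtain ⟨p, hp⟩ := hex
    refine ⟨{p}, by simp, fun q hq => ?_⟩
    rcases hP p q hp hq with rfl | rfl <;> simp
  · exact ⟨∅, by simp, fun p hp => (hex ⟨p, hp⟩).elim⟩

theorem main_theorem_Dpos_definite_general (r h : ℕ) (hr : 7 ≤ r)
    (α β γ δ j χ : ℂ) (A B C : ℤ)
    (hj : j = α * δ - β * γ) (hj0 : j ≠ 0)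
    (hfact : ∀ x y : ℂ, (α * x + β * y) * (γ * x + δ * y) =
      χ * ((A : ℂ) * x ^ 2 + (B : ℂ) * x * y + (C : ℂ) * y ^ 2))
    (hD : 0 < B ^ 2 - 4 * A * C)
    (hdef : (∀ x y : ℝ, (x, y) ≠ (0, 0) → ∃ a : ℝ, 0 < a ∧
        (a : ℂ) = (α * x + β * y) ^ r - (γ * x + δ * y) ^ r) ∨
      (∀ x y : ℝ, (x, y) ≠ (0, 0) → ∃ a : ℝ, a < 0 ∧
        (a : ℂ) = (α * x + β * y) ^ r - (γ * x + δ * y) ^ r))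
    (hΔ : (r : ℝ) ^ (13 * (r : ℝ) ^ 2 * ((r : ℝ) - 1) / ((r : ℝ) ^ 2 - 5 * r - 2)) *
        (h : ℝ) ^ (4 * ((r : ℝ) - 1) * ((r : ℝ) ^ 2 - r + 2) / ((r : ℝ) ^ 2 - 5 * r - 2))
      ≤ ‖j‖ ^ (r * (r - 1)) / ((2 : ℝ) ^ (r ^ 2 - r) * (h : ℝ) ^ (2 * r - 2))) :
    ∃ T : Finset (ℤ × ℤ), T.card ≤ 1 ∧
      ∀ p : ℤ × ℤ, IsPrimSol α β γ δ r h p.1 p.2 → p ∈ T ∨ (-p.1, -p.2) ∈ T := by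
  subst hj
  have hQ (s t : ℝ) (hst : (A : ℝ) * s ^ 2 + B * s * t + C * t ^ 2 = 0) :
      (α * s + β * t) * (γ * s + δ * t) = 0 := by
    rw [hfact, mul_eq_zero]
    exact Or.inr (by exact_mod_cast hst)
  have hbound (p : ℤ × ℤ) (hp : IsPrimSol α β γ δ r h p.1 p.2) :
      ‖lin α β p.1 p.2‖ ^ r ≤ h ∧ ‖lin γ δ p.1 p.2‖ ^ r ≤ h :=
    (norm_lin_pow_le_norm_form hj0 (by exact_mod_cast hD) hQ
      (formPosDef_or_formPosDef_swap hdef) p.1 p.2).imp (·.trans hp.2.2) (·.trans hp.2.2)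
  refine exists_finset_card_le_one_of_eq_or_eq_neg fun p q hp hq => ?_
  by_contra hne
  have hdet : p.1 * q.2 - q.1 * p.2 ≠ 0 :=
    fun h0 => hne (eq_or_eq_neg_of_gcd_eq_one_of_det_eq_zero hp.1 hq.1 h0)
  have hh₀ : (0 : ℝ) < h := hp.2.1.trans_le hp.2.2
  have hh₁ : (1 : ℝ) ≤ h := Nat.one_le_cast.mpr (by exact_mod_cast hh₀)
  have hjr := norm_pow_le_of_det_ne_zero (by omega) hdet (hbound p hp) (hbound q hq)
  exact (one_lt_rpow_mul_rpow (by exact_mod_cast hr) hh₁).not_ge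
    (hΔ.trans (div_le_one_of_pow_le_two_pow_mul_sq (norm_nonneg _) hh₀ hjr))

/-- **= Main theorem, case `D > 0`, `F` definite.** Let `r ≥ 7` and suppose
`|j|^{r(r−1)}/(2^{r²−r}·h^{2r−2}) ≥ r^{13r²(r−1)/(r²−5r−2)}·h^{4(r−1)(r²−r+2)/(r²−5r−2)}`.
If `D = B² − 4AC > 0` and `F` is definite, then the number of primitive solutions of
`0 < |F| ≤ h`, counted up to sign, is at most `1`. -/
theorem main_theorem_Dpos_definite (r h : ℕ) (hr : 7 ≤ r) (hh : 1 ≤ h)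
    (α β γ δ j χ : ℂ) (A B C : ℤ)
    (hj : j = α * δ - β * γ) (hj0 : j ≠ 0) (hint : IntCoeffs α β γ δ r)
    (hχ : ∃ q : ℚ, (q : ℂ) = χ ^ r)
    (hfact : ∀ x y : ℂ, (α * x + β * y) * (γ * x + δ * y) =
      χ * ((A : ℂ) * x ^ 2 + (B : ℂ) * x * y + (C : ℂ) * y ^ 2))
    (hD : 0 < B ^ 2 - 4 * A * C)
    (hdef : (∀ x y : ℝ, (x, y) ≠ (0, 0) → ∃ a : ℝ, 0 < a ∧
        (a : ℂ) = (α * x + β * y) ^ r - (γ * x + δ * y) ^ r) ∨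
      (∀ x y : ℝ, (x, y) ≠ (0, 0) → ∃ a : ℝ, a < 0 ∧
        (a : ℂ) = (α * x + β * y) ^ r - (γ * x + δ * y) ^ r))
    (hΔ : (r : ℝ) ^ (13 * (r : ℝ) ^ 2 * ((r : ℝ) - 1) / ((r : ℝ) ^ 2 - 5 * r - 2)) *
        (h : ℝ) ^ (4 * ((r : ℝ) - 1) * ((r : ℝ) ^ 2 - r + 2) / ((r : ℝ) ^ 2 - 5 * r - 2))
      ≤ ‖j‖ ^ (r * (r - 1)) / ((2 : ℝ) ^ (r ^ 2 - r) * (h : ℝ) ^ (2 * r - 2))) :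
    ∃ T : Finset (ℤ × ℤ), T.card ≤ 1 ∧
      ∀ p : ℤ × ℤ, IsPrimSol α β γ δ r h p.1 p.2 → p ∈ T ∨ (-p.1, -p.2) ∈ T :=
  main_theorem_Dpos_definite_general r h hr α β γ δ j χ A B C hj hj0 hfact hD hdef hΔ
end
end
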